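/- arXiv:2204.03093 — 8 statements merged into one kernel-verified Lean document; each statement's English description precedes it below -/
import Mathlib

section
/- Let H be a complex Hilbert space, let A : H →L[ℂ] H be a continuous linear self-adjoint operator, and let ψ ∈ H be a unit vector. Define the survival probability p(t) = |⟨ψ, exp(−itA)ψ⟩|², where exp denotes the exponential of continuous linear operators. Then, as t → 0, p(t) = 1 − t²·(⟨ψ, A²ψ⟩ − ⟨ψ, Aψ⟩²) + O(t³); i.e. the function t ↦ p(t) − (1 − t²·(re⟨ψ, A(Aψ)⟩ − (re⟨ψ, Aψ⟩)²)) is O(t³) in a neighbourhood of t = 0. -/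
/-!
Expanding the exponential to second order gives
`⟪ψ, exp (-itA) ψ⟫ = 1 - it⟪ψ, Aψ⟫ - (t²/2)⟪ψ, A²ψ⟫ + O(t³)`, and both inner products are real
because `A` is self-adjoint. Near `t = 0` both sides are bounded, so passing to squared moduli
keeps the `O(t³)` error, and the squared modulus of the quadratic polynomial is
`1 - t²(⟪ψ, A²ψ⟫ - ⟪ψ, Aψ⟫²) + t⁴⟪ψ, A²ψ⟫²/4`.
-/

open scoped InnerProductSpace
open Asymptotics Filter Topology Complex

theorem NormedSpace.exp_smul_sub_quadratic_isBigO {𝕂 𝔸 : Type*} [NontriviallyNormedField 𝕂]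
    [CharZero 𝕂] [ContinuousSMul ℚ 𝕂] [NormedRing 𝔸] [NormedAlgebra 𝕂 𝔸] [CompleteSpace 𝔸]
    (a : 𝔸) :
    (fun s : 𝕂 => exp (s • a) - (1 + s • a + (s ^ 2 / 2) • (a * a))) =O[𝓝 0] fun s => s ^ 3 := by
  have hexp := (exp_hasFPowerSeriesAt_zero (𝕂 := 𝕂) (𝔸 := 𝔸)).isBigO_sub_partialSum_pow 3
  have hsmul : Tendsto (fun s : 𝕂 => s • a) (𝓝 0) (𝓝 0) := by
    simpa using (tendsto_id (x := 𝓝 (0 : 𝕂))).smul_const a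
  have hpartial (s : 𝕂) :
      (expSeries 𝕂 𝔸).partialSum 3 (s • a) = 1 + s • a + (s ^ 2 / 2) • (a * a) := by
    simp [FormalMultilinearSeries.partialSum, Finset.sum_range_succ, expSeries_apply_eq, smul_pow,
      pow_two, smul_smul, div_eq_inv_mul]
  refine ((hexp.comp_tendsto hsmul).congr_left fun s => by simp [hpartial]).trans ?_
  refine .of_bound (‖a‖ ^ 3) (Eventually.of_forall fun s => ?_)
  simp [norm_smul, mul_pow, mul_comm]

theorem isBigO_sq_norm_sub_sq_norm {α E : Type*} [SeminormedAddCommGroup E] {l : Filter α}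
    {f g : α → E} {k : α → ℝ} (hfg : (f - g) =O[l] k) (hg : g =O[l] fun _ => (1 : ℝ))
    (hk : k =O[l] fun _ => (1 : ℝ)) :
    (fun x => ‖f x‖ ^ 2 - ‖g x‖ ^ 2) =O[l] k := by
  have hf : f =O[l] fun _ => (1 : ℝ) := by simpa using (hfg.trans hk).add hg
  have hdiff : (fun x => ‖f x‖ - ‖g x‖) =O[l] k :=
    (IsBigO.of_bound 1 (Eventually.of_forall fun x => by
      simpa using abs_norm_sub_norm_le (f x) (g x))).trans hfg
  simpa [sq_sub_sq, mul_comm] using hdiff.mul (hf.norm_left.add hg.norm_left)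

theorem norm_sq_quadratic_sub_isBigO (a b : ℝ) :
    (fun t : ℝ => ‖1 + (-I * t) * a + ((-I * t) ^ 2 / 2) * b‖ ^ 2 - (1 - t ^ 2 * (b - a ^ 2)))
      =O[𝓝 0] fun t => t ^ 3 := by
  have hsplit (t : ℝ) : 1 + (-I * t) * a + ((-I * t) ^ 2 / 2) * b
      = ((1 - t ^ 2 / 2 * b : ℝ) : ℂ) + (-(t * a) : ℝ) * I := by
    push_cast
    linear_combination ((t : ℂ) ^ 2 / 2 * b) * I_sq
  have h (t : ℝ) : ‖1 + (-I * t) * a + ((-I * t) ^ 2 / 2) * b‖ ^ 2 - (1 - t ^ 2 * (b - a ^ 2))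
      = b ^ 2 / 4 * t ^ 4 := by
    rw [hsplit, norm_add_mul_I, Real.sq_sqrt (by positivity)]
    ring
  simpa only [h] using
    (isLittleO_pow_pow (𝕜 := ℝ) (by norm_num : 3 < 4)).isBigO.const_mul_left (b ^ 2 / 4)

/-- Survival probability under unitary evolution generated by a bounded self-adjoint
operator: `p(t) = 1 - t² (⟨ψ, A²ψ⟩ - ⟨ψ, Aψ⟩²) + O(t³)` as `t → 0`. -/
theorem survival_probability_isBigO
    {H : Type*} [NormedAddCommGroup H] [InnerProductSpace ℂ H] [CompleteSpace H]
    (A : H →L[ℂ] H) (hA : IsSelfAdjoint A) (ψ : H) (hψ : ‖ψ‖ = 1)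
    (p : ℝ → ℝ)
    (hp : ∀ t : ℝ,
      p t = ‖⟪ψ, (NormedSpace.exp (((-Complex.I) * (t : ℂ)) • A)) ψ⟫_ℂ‖ ^ 2) :
    (fun t : ℝ =>
        p t - (1 - t ^ 2 * ((⟪ψ, A (A ψ)⟫_ℂ).re - ((⟪ψ, A ψ⟫_ℂ).re) ^ 2)))
      =O[nhds 0] (fun t : ℝ => t ^ 3) := by
  set a := (⟪ψ, A ψ⟫_ℂ).re
  set b := (⟪ψ, A (A ψ)⟫_ℂ).re
  set z : ℝ → ℂ := fun t => 1 + (-I * t) * a + ((-I * t) ^ 2 / 2) * b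
  have ha : ⟪ψ, A ψ⟫_ℂ = a := (hA.isSymmetric.coe_re_inner_self_apply ψ).symm
  have hb : ⟪ψ, A (A ψ)⟫_ℂ = b := ((hA.pow 2).isSymmetric.coe_re_inner_self_apply ψ).symm
  have hs : Tendsto (fun t : ℝ => -I * t) (𝓝 0) (𝓝 0) := by
    simpa using (continuous_ofReal.tendsto 0).const_mul (-I)
  have htaylor : (fun t : ℝ => ⟪ψ, NormedSpace.exp ((-I * t) • A) ψ⟫_ℂ - z t)
      =O[𝓝 0] fun t => t ^ 3 := by
    let L : (H →L[ℂ] H) →L[ℂ] ℂ := (innerSL ℂ ψ).comp (ContinuousLinearMap.apply ℂ H ψ)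
    have hcube : (fun t : ℝ => (-I * t) ^ 3) =O[𝓝 0] fun t : ℝ => t ^ 3 :=
      .of_bound 1 (Eventually.of_forall fun t => by simp)
    refine ((L.isBigO_comp _ _).trans
      ((NormedSpace.exp_smul_sub_quadratic_isBigO A).comp_tendsto hs |>.trans hcube)).congr_left
      fun t => ?_
    simp [L, z, inner_add_right, inner_sub_right, inner_smul_right, hψ, ha, hb]
  have hz : z =O[𝓝 0] fun _ => (1 : ℝ) :=
    ((by fun_prop : Continuous z).tendsto 0).isBigO_one ℝ
  have hcube_bounded : (fun t : ℝ => t ^ 3) =O[𝓝 0] fun _ => (1 : ℝ) :=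
    ((continuous_pow 3).tendsto 0).isBigO_one ℝ
  refine ((isBigO_sq_norm_sub_sq_norm htaylor hz hcube_bounded).add
    (norm_sq_quadratic_sub_isBigO a b)).congr_left fun t => ?_
  rw [hp]
  ring
end

section
/- Let H be a complex Hilbert space, A : H →L[ℂ] H a continuous linear self-adjoint operator, and ψ ∈ H a unit vector. Define f : ℝ → ℝ by f(t) = −ln |⟨ψ, exp(−itA)ψ⟩|². Then f(0) = 0, the first derivative of f at t = 0 vanishes, f′(0) = 0, and one half of the second derivative of f at t = 0 equals the dispersion of A in the state ψ: (1/2)·f″(0) = ⟨ψ, A²ψ⟩ − ⟨ψ, Aψ⟩², i.e. (1/2)·(iteratedDeriv 2 f) 0 = re⟨ψ, A(Aψ)⟩ − (re⟨ψ, Aψ⟩)². -/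
open scoped InnerProductSpace

open Complex Filter Topology

/-!
With `B = -iA` and `g t = ⟪ψ, exp (t • B) ψ⟫`, we have `g 0 = 1`, `g' 0 = -i⟪ψ, Aψ⟫` and
`g'' 0 = -⟪ψ, A(Aψ)⟫`. Since `-ln ‖z‖² = -2 Re (log z)`, `f = -2 Re (log ∘ g)`, and near `0`
(where `g` stays in the slit plane) its derivatives are `-2 Re (g'/g)` and
`-2 Re ((g'' g - g'²)/g²)`. At `0` these are `-2 Im ⟪ψ, Aψ⟫ = 0`, as `A` is self-adjoint, and
`2 (Re ⟪ψ, A(Aψ)⟫ - ⟪ψ, Aψ⟫²)`.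
-/

lemma neg_log_sq_norm_eq_re_log (z : ℂ) : -Real.log (‖z‖ ^ 2) = -2 * (log z).re := by
  rw [Real.log_pow, log_re]
  push_cast
  ring

section LogModulus

variable {g : ℝ → ℂ} {t₀ : ℝ}

theorem HasDerivAt.neg_log_sq_norm {g' : ℂ} (hg : HasDerivAt g g' t₀) (h₀ : g t₀ ∈ slitPlane) :
    HasDerivAt (fun t => -Real.log (‖g t‖ ^ 2)) (-2 * (g' / g t₀).re) t₀ := by
  simp only [neg_log_sq_norm_eq_re_log]
  exact (reCLM.hasFDerivAt.comp_hasDerivAt t₀ (hg.clog_real h₀)).const_mul (-2)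

theorem hasDerivAt_deriv_neg_log_sq_norm {g' : ℝ → ℂ} {g'' : ℂ}
    (hg : ∀ᶠ t in 𝓝 t₀, HasDerivAt g (g' t) t) (hg' : HasDerivAt g' g'' t₀)
    (h₀ : g t₀ ∈ slitPlane) :
    HasDerivAt (deriv fun t => -Real.log (‖g t‖ ^ 2))
      (-2 * ((g'' * g t₀ - g' t₀ * g' t₀) / g t₀ ^ 2).re) t₀ := by
  have hslit : ∀ᶠ t in 𝓝 t₀, g t ∈ slitPlane :=
    hg.self_of_nhds.continuousAt.preimage_mem_nhds (isOpen_slitPlane.mem_nhds h₀)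
  have hderiv :
      (deriv fun t => -Real.log (‖g t‖ ^ 2)) =ᶠ[𝓝 t₀] fun t => -2 * (g' t / g t).re := by
    filter_upwards [hg, hslit] with t hgt ht
    exact (hgt.neg_log_sq_norm ht).deriv
  have hquot := hg'.div hg.self_of_nhds (slitPlane_ne_zero h₀)
  exact ((reCLM.hasFDerivAt.comp_hasDerivAt t₀ hquot).const_mul (-2)).congr_of_eventuallyEq hderiv

end LogModulus

theorem hasDerivAt_apply_exp_smul_mul {𝕂 𝔸 E : Type*} [RCLike 𝕂] [NormedRing 𝔸]
    [NormedAlgebra 𝕂 𝔸] [CompleteSpace 𝔸] [NormedAddCommGroup E] [NormedSpace 𝕂 E]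
    (φ : 𝔸 →L[𝕂] E) (x c : 𝔸) (t : 𝕂) :
    HasDerivAt (fun u : 𝕂 => φ (NormedSpace.exp (u • x) * c))
      (φ (NormedSpace.exp (t • x) * x * c)) t :=
  φ.hasFDerivAt.comp_hasDerivAt t ((hasDerivAt_exp_smul_const x t).mul_const c)

/-- For `f(t) = -ln |⟨ψ, exp(-itA) ψ⟩|²` with `ψ` a unit vector and `A` bounded
self-adjoint, one has `f(0) = 0`, `f'(0) = 0`, and half the second derivative of `f`
at `0` equals the dispersion `⟨ψ, A²ψ⟩ - ⟨ψ, Aψ⟩²` of `A` in the state `ψ`. -/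
theorem geometric_entanglement_derivatives_at_zero
    {H : Type*} [NormedAddCommGroup H] [InnerProductSpace ℂ H] [CompleteSpace H]
    (A : H →L[ℂ] H) (hA : IsSelfAdjoint A) (ψ : H) (hψ : ‖ψ‖ = 1)
    (f : ℝ → ℝ)
    (hf : ∀ t : ℝ,
      f t = -Real.log
        (‖⟪ψ, (NormedSpace.exp (((-Complex.I) * (t : ℂ)) • A)) ψ⟫_ℂ‖ ^ 2)) :
    f 0 = 0 ∧ deriv f 0 = 0 ∧
      (1 / 2 : ℝ) * iteratedDeriv 2 f 0
        = (⟪ψ, A (A ψ)⟫_ℂ).re - ((⟪ψ, A ψ⟫_ℂ).re) ^ 2 := by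
  set B : H →L[ℂ] H := -I • A
  set φ : (H →L[ℂ] H) →L[ℝ] ℂ :=
    ((innerSL ℂ ψ).comp (ContinuousLinearMap.apply ℂ H ψ)).restrictScalars ℝ
  set g : ℝ → ℂ := fun t => φ (NormedSpace.exp (t • B))
  have hfg : f = fun t => -Real.log (‖g t‖ ^ 2) := funext fun t => by
    rw [hf, mul_comm, ← smul_smul, Complex.coe_smul]; rfl
  have hg (t : ℝ) : HasDerivAt g (φ (NormedSpace.exp (t • B) * B)) t := by
    simpa using hasDerivAt_apply_exp_smul_mul φ B 1 t
  have hg' := hasDerivAt_apply_exp_smul_mul φ B B 0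
  have hg0 : g 0 = 1 := by
    simp [g, φ, inner_self_eq_norm_sq_to_K, hψ]
  have hmean_real : (⟪ψ, A ψ⟫_ℂ).im = 0 :=
    conj_eq_iff_im.mp ((inner_conj_symm _ _).trans (hA.isSymmetric ψ ψ))
  have hg'0 : φ (NormedSpace.exp ((0 : ℝ) • B) * B) = -I * ⟪ψ, A ψ⟫_ℂ := by
    simp [φ, B, inner_smul_right]
  have hg''0 : φ (NormedSpace.exp ((0 : ℝ) • B) * B * B) = -⟪ψ, A (A ψ)⟫_ℂ := by
    simp [φ, B, ← mul_assoc]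
  subst hfg
  refine ⟨by simp [hg0], ?_, ?_⟩
  · rw [((hg 0).neg_log_sq_norm (by simp [hg0])).deriv, hg'0, hg0]
    simp [hmean_real]
  · rw [iteratedDeriv_succ, iteratedDeriv_one,
      (hasDerivAt_deriv_neg_log_sq_norm (.of_forall hg) hg' (by simp [hg0])).deriv,
      hg'0, hg''0, hg0]
    simp only [mul_one, one_pow, div_one, sub_re, neg_re, mul_re, mul_im, neg_im, I_re, I_im,
      hmean_real]
    ring
end

section
/- In any commutative ring R, the Chebyshev polynomials of the second kind satisfy the product (spin-recoupling) formula: for all natural numbers m and n, U_m · U_n = ∑_{k=0}^{min(m,n)} U_{m+n−2k}. Equivalently, in terms of SU(2) characters χ_ℓ (with χ_ℓ(θ) = U_{2ℓ}(cos θ)), this is the character recoupling formula χ_{ℓ₁}·χ_{ℓ₂} = ∑_{s=|ℓ₁−ℓ₂|}^{ℓ₁+ℓ₂} χ_s. -/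
open Polynomial Polynomial.Chebyshev


lemma chebyshev_U_mul_U_key (R : Type*) [CommRing R] (m n : ℤ) :
    U R m * U R n = U R (m + 1) * U R (n - 1) + U R (m - n) := by
  induction n using Polynomial.Chebyshev.induct with
  | zero => simp
  | one =>
    simp only [show (1:ℤ)-1 = 0 by norm_num, U_zero, U_one, mul_one]
    linear_combination -U_add_one R m
  | add_two n ih1 ih2 =>
    have h₃ := U_add_two R n
    have h₄ := U_sub_two R (m - n)
    have h₅ := U_add_two R (n - 1)
    have e : (n : ℤ) - 1 + 2 = n + 1 := by ring
    rw [e] at h₅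
    rw [show (n:ℤ)+1-1 = n by ring] at ih1
    rw [show (n:ℤ)-1+1 = n by ring] at h₅
    linear_combination (norm := ring_nf) U R m * h₃ + 2*(X:R[X])*ih1 - ih2 - U R (m+1) * h₅ - h₄
  | neg_add_one n ih1 ih2 =>
    have h₃ := U_sub_two R (-n + 1)
    have h₄ := U_sub_two R (-n)
    have h₅ := U_add_two R (m + n - 1)
    rw [show -(n:ℤ)+1-2 = -n-1 by ring, show -(n:ℤ)+1-1 = -n by ring] at h₃
    rw [show -(n:ℤ)+1-1 = -n by ring, show m-(-(n:ℤ)+1) = m+n-1 by ring] at ih2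
    rw [show m - -(n:ℤ) = m+n by ring] at ih1
    rw [show m+(n:ℤ)-1+2 = m+n+1 by ring, show m+(n:ℤ)-1+1 = m+n by ring] at h₅
    linear_combination (norm := ring_nf) U R m * h₃ + 2*(X:R[X])*ih1 - ih2 - U R (m+1) * h₄ - h₅

lemma chebyshev_U_mul_U_aux (R : Type*) [CommRing R] (n : ℕ) : ∀ m : ℕ, n ≤ m →
    U R m * U R n = ∑ k ∈ Finset.range (n + 1), U R ((m : ℤ) + n - 2 * k) := by
  induction n with
  | zero => intro m _; simp
  | succ n ih =>
    intro m hm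
    have key := chebyshev_U_mul_U_key R m (n + 1 : ℕ)
    rw [Finset.sum_range_succ]
    have e1 : ((n : ℤ) + 1 : ℤ) - 1 = n := by push_cast; ring
    have e2 : (m : ℤ) - ((n : ℕ) + 1 : ℕ) = (m : ℤ) + ((n : ℕ)+1 : ℕ) - 2 * ((n+1 : ℕ)) := by
      push_cast; ring
    rw [show (((n : ℕ) + 1 : ℕ) : ℤ) - 1 = ((n : ℕ) : ℤ) by push_cast; ring] at key
    have ihm := ih (m + 1) (by omega)
    rw [show ((m : ℤ)) + 1 = ((m + 1 : ℕ) : ℤ) by push_cast; ring, ihm] at key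
    rw [key, e2]
    congr 1
    apply Finset.sum_congr rfl
    intro k _
    congr 1
    push_cast; ring


/-- Product (spin-recoupling) formula for Chebyshev polynomials of the second kind:
`U_m · U_n = ∑_{k=0}^{min(m,n)} U_{m+n-2k}`, the polynomial form of the `SU(2)`
character recoupling formula `χ_{ℓ₁} χ_{ℓ₂} = ∑_{s=|ℓ₁-ℓ₂|}^{ℓ₁+ℓ₂} χ_s`. -/
theorem chebyshev_U_mul_U (R : Type*) [CommRing R] (m n : ℕ) :
    U R m * U R n
      = ∑ k ∈ Finset.range (min m n + 1), U R ((m : ℤ) + n - 2 * k) := by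

  rcases le_total n m with h | h
  · rw [min_eq_right h]; exact chebyshev_U_mul_U_aux R n m h
  · rw [min_eq_left h, mul_comm]
    rw [chebyshev_U_mul_U_aux R m n h]
    apply Finset.sum_congr rfl
    intro k _; congr 1; push_cast; ring
end

section
/- Composite rule for Wigner d-matrices (two-vertex case): let ℓ₁, ℓ₂ be half-integer spins, θ₁, θ₂ ∈ ℝ, and let Δ₁, Δ₂ be shifts with Δ₁ − (ℓ₁ + ℓ₂) ∈ ℤ and Δ₂ − (ℓ₁ + ℓ₂) ∈ ℤ. Then ∑_{ε₁, ε₂} d^{ℓ₁}_{ε₁,ε₂}(θ₁) · d^{ℓ₁}_{ε₂,ε₁}(θ₂) · d^{ℓ₂}_{ε₁+Δ₁, ε₂+Δ₂}(θ₁) · d^{ℓ₂}_{ε₂+Δ₂, ε₁+Δ₁}(θ₂) = ∑_{s=|ℓ₁−ℓ₂|}^{ℓ₁+ℓ₂} d^{s}_{Δ₁,Δ₂}(θ₁) · d^{s}_{Δ₂,Δ₁}(θ₂), where ε₁, ε₂ range over {−ℓ₁, −ℓ₁+1, …, ℓ₁}, s increases in integer steps from |ℓ₁−ℓ₂| to ℓ₁+ℓ₂,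 and any d-matrix element whose magnetic indices lie outside the allowed range for its spin is zero by convention. -/
/-
Up to conjugation by the diagonal matrix `√((ℓ+m)!(ℓ-m)!)`, which cancels in the products
`d_{mn}(θ₁) d_{nm}(θ₂)`, the matrix `d^ℓ(θ)` is the `2ℓ`-th symmetric power of the spin-½
rotation `R(θ)` acting on binary forms. With formal Laurent variables `x, y`, the character
`χ_ℓ` of `Sym^{2ℓ}` at `g = diag(x, x⁻¹) R(θ₁) diag(y, y⁻¹) R(θ₂)` is therefore the generating
function `∑_{m,n} d^ℓ_{mn}(θ₁) d^ℓ_{nm}(θ₂) x^{2m} y^{2n}`, and the left-hand side of the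
composite rule is the coefficient of `x^{2Δ₁} y^{2Δ₂}` in `χ_{ℓ₁}(g') χ_{ℓ₂}(g)`, where `g'` is
`g` with `x, y` inverted. Since `det g = 1`, `χ_ℓ(g) = S_{2ℓ}(tr g)` for the Chebyshev
polynomials `S`. Hence `χ_{ℓ₁}(g') = χ_{ℓ₁}(g)` because `tr g' = tr g`, and the Clebsch–Gordan
rule `χ_{ℓ₁} χ_{ℓ₂} = ∑_s χ_s` follows from `S_a S_b = ∑_k S_{a-b+2k}`; comparing coefficients
gives the right-hand side.
-/

/-- The Wigner (small) d-matrix element `d^ℓ_{m,n}(θ)`, encoded via doubled indices: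
`L = 2ℓ`, `M = 2m`, `N = 2n` (so that `ℓ ± m` and `ℓ ± n` are the integers
`(L ± M)/2`, `(L ± N)/2`).  It vanishes by convention when `|m| > ℓ` or `|n| > ℓ`. -/
noncomputable def wignerd (L M N : ℤ) (θ : ℝ) : ℝ :=
  if |M| ≤ L ∧ |N| ≤ L then
    Real.sqrt
      ((Nat.factorial ((L + M) / 2).toNat * Nat.factorial ((L - M) / 2).toNat *
        Nat.factorial ((L + N) / 2).toNat * Nat.factorial ((L - N) / 2).toNat : ℕ)) *
    ∑ s ∈ Finset.Icc (max 0 ((N - M) / 2)) (min ((L + N) / 2) ((L - M) / 2)),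
      (-1 : ℝ) ^ ((M - N) / 2 + s) *
        Real.cos (θ / 2) ^ (L + (N - M) / 2 - 2 * s) *
        Real.sin (θ / 2) ^ ((M - N) / 2 + 2 * s) /
        ((Nat.factorial ((L + N) / 2 - s).toNat * Nat.factorial s.toNat *
          Nat.factorial ((M - N) / 2 + s).toNat *
          Nat.factorial ((L - M) / 2 - s).toNat : ℕ))
  else 0

namespace Polynomial.Chebyshev

variable (R : Type*) [CommRing R]

theorem X_mul_S (n : ℤ) : X * S R n = S R (n + 1) + S R (n - 1) := by
  rw [S_add_one]; ring

theorem S_mul_S_eq_sum (m : ℤ) (n : ℕ) :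
    S R m * S R n = ∑ k ∈ Finset.range (n + 1), S R (m - n + 2 * k) := by
  induction n using Nat.strong_induction_on generalizing m with
  | _ n ih =>
    match n with
    | 0 => simp
    | 1 =>
      simp only [Nat.cast_one, S_one, Finset.sum_range_succ, Finset.sum_range_zero]
      rw [mul_comm, X_mul_S]
      ring_nf
    | n + 2 =>
      have hrec : S R (n + 2 : ℕ) = X * S R (n + 1 : ℕ) - S R n := by
        push_cast; exact S_add_two R n
      have hup : ∑ k ∈ Finset.range (n + 2), S R (m + 1 - (n + 1 : ℕ) + 2 * k)
          = ∑ k ∈ Finset.range (n + 1), S R (m - n + 2 * k) + S R (m + n + 2) := by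
        rw [Finset.sum_range_succ]; push_cast; ring_nf
      have hdown : ∑ k ∈ Finset.range (n + 3), S R (m - (n + 2 : ℕ) + 2 * k)
          = ∑ k ∈ Finset.range (n + 2), S R (m - 1 - (n + 1 : ℕ) + 2 * k) + S R (m + n + 2) := by
        rw [Finset.sum_range_succ]; push_cast; ring_nf
      calc S R m * S R (n + 2 : ℕ)
          = S R (m + 1) * S R (n + 1 : ℕ) + S R (m - 1) * S R (n + 1 : ℕ) - S R m * S R n := by
            rw [hrec, ← add_mul, ← X_mul_S]; ring
        _ = _ := by
            rw [ih (n + 1) (by omega), ih (n + 1) (by omega), ih n (by omega), hup, hdown]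
            ring

end Polynomial.Chebyshev

theorem Finsupp.degree_fin_two {M : Type*} [AddCommMonoid M] (m : Fin 2 →₀ M) :
    m.degree = m 0 + m 1 := by
  rw [Finsupp.degree_eq_sum, Fin.sum_univ_two]

namespace Wigner

open Finset

section SymmetricPower

open MvPolynomial

variable {R : Type*} [CommRing R]

noncomputable def symExponent (L j : ℕ) : Fin 2 →₀ ℕ :=
  Finsupp.single 0 j + Finsupp.single 1 (L - j)

@[simp] lemma symExponent_zero (L j : ℕ) : symExponent L j 0 = j := by simp [symExponent]

@[simp] lemma symExponent_one (L j : ℕ) : symExponent L j 1 = L - j := by simp [symExponent]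

lemma symExponent_injective (L : ℕ) : Function.Injective (symExponent L) := fun j k h => by
  simpa using congrArg (· 0) h

lemma eq_symExponent_of_degree_eq {m : Fin 2 →₀ ℕ} {L : ℕ} (h : m.degree = L) :
    m = symExponent L (m 0) := by
  rw [Finsupp.degree_fin_two] at h
  ext i; fin_cases i <;> simp; omega

noncomputable def symMonomial (L i : ℕ) : MvPolynomial (Fin 2) R := X 0 ^ i * X 1 ^ (L - i)

lemma symMonomial_eq_monomial (L i : ℕ) :
    (symMonomial L i : MvPolynomial (Fin 2) R) = monomial (symExponent L i) 1 := by
  rw [symMonomial, X_pow_eq_monomial, X_pow_eq_monomial, monomial_mul, one_mul, symExponent]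

lemma coeff_symExponent_C_mul_symMonomial (L j k : ℕ) (a : R) :
    coeff (symExponent L j) (C a * symMonomial L k) = if k = j then a else 0 := by
  rw [symMonomial_eq_monomial, C_mul_monomial, coeff_monomial, mul_one]
  exact if_congr (symExponent_injective L).eq_iff rfl rfl

lemma coeff_symExponent_eq_zero_of_lt {p : MvPolynomial (Fin 2) R} {L j : ℕ}
    (hp : p.IsHomogeneous L) (hj : L < j) : coeff (symExponent L j) p = 0 :=
  hp.coeff_eq_zero <| by rw [Finsupp.degree_fin_two]; simp; omega

lemma eq_sum_symMonomial_of_isHomogeneous {p : MvPolynomial (Fin 2) R} {L : ℕ}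
    (hp : p.IsHomogeneous L) :
    p = ∑ k ∈ range (L + 1), C (coeff (symExponent L k) p) * symMonomial L k := by
  have hsupp : p.support ⊆ (range (L + 1)).image (symExponent L) := fun m hm => by
    have hdeg : m.degree = L := by
      rw [Finsupp.degree_eq_weight_one]; exact hp (mem_support_iff.mp hm)
    refine mem_image.mpr ⟨m 0, mem_range.mpr ?_, (eq_symExponent_of_degree_eq hdeg).symm⟩
    rw [Finsupp.degree_fin_two] at hdeg; omega
  conv_lhs => rw [p.as_sum, sum_subset hsupp fun m _ hm => by
    rw [notMem_support_iff.mp hm, monomial_zero]]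
  rw [sum_image fun j _ k _ h => symExponent_injective L h]
  simp only [symMonomial_eq_monomial, C_mul_monomial, mul_one]

lemma coeff_symExponent_succ_X_zero_mul (p : MvPolynomial (Fin 2) R) (L j : ℕ) :
    coeff (symExponent (L + 1) (j + 1)) (X 0 * p) = coeff (symExponent L j) p := by
  rw [coeff_X_mul', if_pos (by simp)]
  congr 1
  ext k; fin_cases k <;> simp

lemma coeff_symExponent_zero_X_zero_mul (p : MvPolynomial (Fin 2) R) (L : ℕ) :
    coeff (symExponent (L + 1) 0) (X 0 * p) = 0 := by
  rw [coeff_X_mul', if_neg (by simp)]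

lemma coeff_symExponent_succ_X_one_mul {p : MvPolynomial (Fin 2) R} {L : ℕ}
    (hp : p.IsHomogeneous L) (j : ℕ) :
    coeff (symExponent (L + 1) j) (X 1 * p) = coeff (symExponent L j) p := by
  rcases le_or_gt j L with hj | hj
  · rw [coeff_X_mul', if_pos (by simp; omega)]
    congr 1
    ext k; fin_cases k <;> simp; omega
  · rw [coeff_X_mul', if_neg (by simp; omega), coeff_symExponent_eq_zero_of_lt hp hj]

lemma symMonomial_succ_succ (L i : ℕ) :
    (symMonomial (L + 1) (i + 1) : MvPolynomial (Fin 2) R) = X 0 * symMonomial L i := by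
  rw [symMonomial, symMonomial, Nat.add_sub_add_right]; ring

lemma symMonomial_succ_of_le {L i : ℕ} (hi : i ≤ L) :
    (symMonomial (L + 1) i : MvPolynomial (Fin 2) R) = X 1 * symMonomial L i := by
  rw [symMonomial, symMonomial, Nat.sub_add_comm hi]; ring

noncomputable def linearSubst (g : Matrix (Fin 2) (Fin 2) R) :
    MvPolynomial (Fin 2) R →ₐ[R] MvPolynomial (Fin 2) R :=
  aeval fun i => ∑ k, C (g k i) * X k

lemma linearSubst_X (g : Matrix (Fin 2) (Fin 2) R) (i : Fin 2) :
    linearSubst g (X i) = C (g 0 i) * X 0 + C (g 1 i) * X 1 := by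
  simp [linearSubst, Fin.sum_univ_two]

lemma linearSubst_C (g : Matrix (Fin 2) (Fin 2) R) (a : R) : linearSubst g (C a) = C a := by
  simp [linearSubst, algebraMap_eq]

lemma linearSubst_linearSubst (g h : Matrix (Fin 2) (Fin 2) R) (p : MvPolynomial (Fin 2) R) :
    linearSubst g (linearSubst h p) = linearSubst (g * h) p := by
  suffices (linearSubst g).comp (linearSubst h) = linearSubst (g * h) from
    DFunLike.congr_fun this p
  refine algHom_ext fun i => ?_
  simp only [AlgHom.comp_apply, linearSubst_X, map_add, map_mul, linearSubst_C, Matrix.mul_apply,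
    Fin.sum_univ_two]
  ring

lemma isHomogeneous_linearSubst_symMonomial (g : Matrix (Fin 2) (Fin 2) R) {L i : ℕ}
    (hi : i ≤ L) : (linearSubst g (symMonomial L i)).IsHomogeneous L := by
  have hlin (j : Fin 2) : (linearSubst g (X j)).IsHomogeneous 1 := by
    rw [linearSubst_X]
    exact ((isHomogeneous_X R 0).C_mul _).add ((isHomogeneous_X R 1).C_mul _)
  have := ((hlin 0).pow i).mul ((hlin 1).pow (L - i))
  rwa [one_mul, one_mul, Nat.add_sub_cancel' hi, ← map_pow, ← map_pow, ← map_mul] at this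

lemma linearSubst_diagonal_symMonomial (α β : R) (L i : ℕ) :
    linearSubst !![α, 0; 0, β] (symMonomial L i) = C (α ^ i * β ^ (L - i)) * symMonomial L i := by
  simp only [symMonomial, map_mul, map_pow, linearSubst_X, Matrix.of_apply, Matrix.cons_val',
    Matrix.cons_val_zero, Matrix.cons_val_fin_one, Matrix.cons_val_one, C_0, zero_mul, add_zero,
    zero_add, mul_pow]
  ring

/-- The matrix of `Sym^L g` in the monomial basis `x ^ j * y ^ (L - j)`, `j ≤ L`. -/
noncomputable def symPow (L : ℕ) (g : Matrix (Fin 2) (Fin 2) R) (j i : ℕ) : R :=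
  coeff (symExponent L j) (linearSubst g (symMonomial L i))

noncomputable def symPowTrace (L : ℕ) (g : Matrix (Fin 2) (Fin 2) R) : R :=
  ∑ i ∈ range (L + 1), symPow L g i i

noncomputable def symPowSubdiagSum (L : ℕ) (g : Matrix (Fin 2) (Fin 2) R) : R :=
  ∑ i ∈ range (L + 1), symPow L g (i + 1) i

variable {L i : ℕ} (g : Matrix (Fin 2) (Fin 2) R)

lemma linearSubst_symMonomial_eq_sum (hi : i ≤ L) :
    linearSubst g (symMonomial L i)
      = ∑ k ∈ range (L + 1), C (symPow L g k i) * symMonomial L k :=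
  eq_sum_symMonomial_of_isHomogeneous (isHomogeneous_linearSubst_symMonomial g hi)

lemma symPow_eq_zero_of_lt {j : ℕ} (hi : i ≤ L) (hj : L < j) : symPow L g j i = 0 :=
  coeff_symExponent_eq_zero_of_lt (isHomogeneous_linearSubst_symMonomial g hi) hj

lemma symPow_mul (h : Matrix (Fin 2) (Fin 2) R) (j : ℕ) (hi : i ≤ L) :
    symPow L (g * h) j i = ∑ k ∈ range (L + 1), symPow L g j k * symPow L h k i := by
  rw [symPow, ← linearSubst_linearSubst, linearSubst_symMonomial_eq_sum h hi, map_sum, coeff_sum]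
  refine sum_congr rfl fun k _ => ?_
  rw [map_mul, linearSubst_C, coeff_C_mul, mul_comm]
  rfl

lemma symPow_diagonal (α β : R) (L j k : ℕ) :
    symPow L !![α, 0; 0, β] j k = if k = j then α ^ k * β ^ (L - k) else 0 := by
  rw [symPow, linearSubst_diagonal_symMonomial, coeff_symExponent_C_mul_symMonomial]

lemma symPow_diagonal_mul (α β : R) {j : ℕ} (hj : j ≤ L) (hi : i ≤ L) :
    symPow L (!![α, 0; 0, β] * g) j i = α ^ j * β ^ (L - j) * symPow L g j i := by
  simp only [symPow_mul _ _ _ hi, symPow_diagonal, ite_mul, zero_mul]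
  rw [sum_ite_eq', if_pos (mem_range.mpr (by omega))]

lemma symPow_map {S : Type*} [CommRing S] (f : R →+* S) (j i : ℕ) :
    symPow L (g.map f) j i = f (symPow L g j i) := by
  have hcomm (p : MvPolynomial (Fin 2) R) :
      linearSubst (g.map f) (map f p) = map f (linearSubst g p) := by
    induction p using MvPolynomial.induction_on with
    | C a => simp
    | add p q hp hq => simp [hp, hq]
    | mul_X p n hp => simp [hp, linearSubst_X]
  rw [symPow, symPow, ← coeff_map, ← hcomm]
  simp [symMonomial]

lemma coeff_symExponent_succ_linearSubst_X_mul (c : Fin 2) (hi : i ≤ L) (j : ℕ) :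
    coeff (symExponent (L + 1) (j + 1)) (linearSubst g (X c * symMonomial L i))
      = g 0 c * symPow L g j i + g 1 c * symPow L g (j + 1) i := by
  rw [map_mul, linearSubst_X, add_mul, mul_assoc, mul_assoc, coeff_add, coeff_C_mul, coeff_C_mul,
    coeff_symExponent_succ_X_zero_mul,
    coeff_symExponent_succ_X_one_mul (isHomogeneous_linearSubst_symMonomial g hi)]
  rfl

lemma symPow_succ_succ_succ (hi : i ≤ L) (j : ℕ) :
    symPow (L + 1) g (j + 1) (i + 1) = g 0 0 * symPow L g j i + g 1 0 * symPow L g (j + 1) i := by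
  rw [symPow, symMonomial_succ_succ, coeff_symExponent_succ_linearSubst_X_mul g 0 hi]

lemma symPow_succ_succ_left (hi : i ≤ L) (j : ℕ) :
    symPow (L + 1) g (j + 1) i = g 0 1 * symPow L g j i + g 1 1 * symPow L g (j + 1) i := by
  rw [symPow, symMonomial_succ_of_le hi, coeff_symExponent_succ_linearSubst_X_mul g 1 hi]

lemma symPow_succ_zero_left (hi : i ≤ L) : symPow (L + 1) g 0 i = g 1 1 * symPow L g 0 i := by
  rw [symPow, symMonomial_succ_of_le hi, map_mul, linearSubst_X, add_mul, mul_assoc, mul_assoc,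
    coeff_add, coeff_C_mul, coeff_C_mul, coeff_symExponent_zero_X_zero_mul,
    coeff_symExponent_succ_X_one_mul (isHomogeneous_linearSubst_symMonomial g hi), mul_zero,
    zero_add]
  rfl

lemma symPow_zero_zero (L : ℕ) : symPow L g 0 0 = g 1 1 ^ L := by
  induction L with
  | zero => simp [symPow, symMonomial, symExponent]
  | succ L ih => rw [symPow_succ_zero_left g (Nat.zero_le L), ih, pow_succ']

lemma symPowTrace_succ (L : ℕ) :
    symPowTrace (L + 1) g
      = g 0 0 * symPowTrace L g + g 1 0 * symPowSubdiagSum L g + g 1 1 ^ (L + 1) := by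
  rw [symPowTrace, sum_range_succ', symPow_zero_zero, symPowTrace, symPowSubdiagSum, mul_sum,
    mul_sum, ← sum_add_distrib]
  congr 1
  exact sum_congr rfl fun i hi => symPow_succ_succ_succ g (by simp at hi; omega) i

lemma symPowSubdiagSum_succ (L : ℕ) :
    symPowSubdiagSum (L + 1) g = g 0 1 * symPowTrace L g + g 1 1 * symPowSubdiagSum L g := by
  rw [symPowSubdiagSum, sum_range_succ, symPow_eq_zero_of_lt g le_rfl (by omega), add_zero,
    symPowTrace, symPowSubdiagSum, mul_sum, mul_sum, ← sum_add_distrib]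
  exact sum_congr rfl fun i hi => symPow_succ_succ_left g (by simp at hi; omega) i

lemma symPowTrace_succ_succ (L : ℕ) :
    symPowTrace (L + 2) g = g.trace * symPowTrace (L + 1) g - g.det * symPowTrace L g := by
  rw [symPowTrace_succ, symPowSubdiagSum_succ, symPowTrace_succ, Matrix.trace_fin_two,
    Matrix.det_fin_two]
  ring

open Polynomial.Chebyshev in
theorem symPowTrace_eq_eval_S {g : Matrix (Fin 2) (Fin 2) R} (hg : g.det = 1) (L : ℕ) :
    symPowTrace L g = (S R L).eval g.trace := by
  induction L using Nat.twoStepInduction with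
  | zero => simp [symPowTrace, symPow_zero_zero]
  | one =>
    rw [symPowTrace_succ, symPowSubdiagSum, sum_range_one,
      symPow_eq_zero_of_lt g le_rfl (by omega : 0 < 0 + 1)]
    simp [symPowTrace, symPow_zero_zero, Matrix.trace_fin_two]
  | more L ih₀ ih₁ =>
    rw [symPowTrace_succ_succ, ih₀, ih₁, hg]
    push_cast
    rw [S_add_two]
    simp

theorem symPowTrace_mul_symPowTrace {g : Matrix (Fin 2) (Fin 2) R} (hg : g.det = 1) (a b : ℕ) :
    symPowTrace a g * symPowTrace b g
      = ∑ k ∈ range (min a b + 1), symPowTrace (((a : ℤ) - b).natAbs + 2 * k) g := by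
  wlog hba : b ≤ a generalizing a b
  · rw [mul_comm, this b a (by omega), min_comm, ← Int.natAbs_neg, neg_sub]
  simp only [symPowTrace_eq_eval_S hg, ← Polynomial.eval_mul,
    Polynomial.Chebyshev.S_mul_S_eq_sum, Polynomial.eval_finsetSum, min_eq_right hba]
  refine sum_congr rfl fun k _ => ?_
  congr 3
  omega

lemma symPow_eq_sum (hi : i ≤ L) (j : ℕ) :
    symPow L g j i
      = ∑ p ∈ range (i + 1), ∑ q ∈ range (L - i + 1),
          if p + q = j then
            (i.choose p * (L - i).choose q : R) * g 0 0 ^ p * g 1 0 ^ (i - p) * g 0 1 ^ q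
              * g 1 1 ^ (L - i - q)
          else 0 := by
  have hexpand : linearSubst g (symMonomial L i)
      = ∑ p ∈ range (i + 1), ∑ q ∈ range (L - i + 1),
          C ((i.choose p * (L - i).choose q : R) * g 0 0 ^ p * g 1 0 ^ (i - p) * g 0 1 ^ q
              * g 1 1 ^ (L - i - q)) * symMonomial L (p + q) := by
    rw [symMonomial, map_mul, map_pow, map_pow, linearSubst_X, linearSubst_X, add_pow, add_pow,
      sum_mul_sum]
    refine sum_congr rfl fun p hp => sum_congr rfl fun q hq => ?_
    rw [mem_range] at hp hq
    rw [symMonomial, show L - (p + q) = (i - p) + (L - i - q) by omega]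
    simp only [map_mul, map_pow, map_natCast, mul_pow, pow_add]
    ring
  rw [symPow, hexpand, coeff_sum]
  refine sum_congr rfl fun p _ => ?_
  rw [coeff_sum]
  exact sum_congr rfl fun q _ => coeff_symExponent_C_mul_symMonomial L j (p + q) _

end SymmetricPower

/-- The spin-`1/2` representation of the rotation by `θ` about the `y`-axis. -/
noncomputable def spinRotation (θ : ℝ) : Matrix (Fin 2) (Fin 2) ℝ :=
  !![Real.cos (θ / 2), -Real.sin (θ / 2); Real.sin (θ / 2), Real.cos (θ / 2)]

lemma det_spinRotation (θ : ℝ) : (spinRotation θ).det = 1 := by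
  rw [spinRotation, Matrix.det_fin_two_of]
  linear_combination Real.sin_sq_add_cos_sq (θ / 2)

lemma symPow_spinRotation (θ : ℝ) {L j i : ℕ} (hj : j ≤ L) (hi : i ≤ L) :
    symPow L (spinRotation θ) j i
      = (i.factorial * (L - i).factorial : ℝ) *
        ∑ s ∈ Icc (max 0 ((i : ℤ) - j)) (min (i : ℤ) (L - j)),
          (-1 : ℝ) ^ ((j : ℤ) - i + s) * Real.cos (θ / 2) ^ ((L : ℤ) + (i - j) - 2 * s) *
            Real.sin (θ / 2) ^ ((j : ℤ) - i + 2 * s) /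
            ((((i : ℤ) - s).toNat.factorial * s.toNat.factorial *
              ((j : ℤ) - i + s).toNat.factorial * ((L : ℤ) - j - s).toNat.factorial : ℕ) : ℝ) := by
  rw [symPow_eq_sum _ hi, mul_sum, ← sum_product', ← sum_filter]
  -- the term `(p, q)` (powers of `x` taken from the two binomial factors) is the term `s = i - p`
  refine sum_nbij' (fun x => (i : ℤ) - x.1)
    (fun s => (((i : ℤ) - s).toNat, ((j : ℤ) - i + s).toNat)) ?_ ?_ ?_ ?_ ?_ <;>
    simp only [mem_filter, mem_product, mem_range, mem_Icc, max_le_iff, le_min_iff]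
  · intro x hx; omega
  · intro s hs; omega
  · intro x hx; ext <;> simp; omega
  · intro s hs; omega
  · rintro ⟨p, q⟩ ⟨⟨hp, hq⟩, rfl⟩
    have e1 : ((i : ℤ) - (i - p)).toNat = p := by omega
    have e2 : ((i : ℤ) - p).toNat = i - p := by omega
    have e3 : ((p + q : ℕ) - (i : ℤ) + (i - p)).toNat = q := by omega
    have e4 : ((L : ℤ) - (p + q : ℕ) - (i - p)).toNat = L - i - q := by omega
    have e5 : ((p + q : ℕ) : ℤ) - i + (i - p) = (q : ℕ) := by omega
    have e6 : (L : ℤ) + (i - (p + q : ℕ)) - 2 * (i - p) = ((p + (L - i - q) : ℕ) : ℤ) := by omega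
    have e7 : ((p + q : ℕ) : ℤ) - i + 2 * (i - p) = (((i - p) + q : ℕ) : ℤ) := by omega
    rw [e1, e2, e3, e4, e5, e6, e7, zpow_natCast, zpow_natCast, zpow_natCast,
      Nat.cast_choose ℝ (by omega : p ≤ i), Nat.cast_choose ℝ (by omega : q ≤ L - i)]
    simp only [spinRotation, Matrix.of_apply, Matrix.cons_val', Matrix.cons_val_zero,
      Matrix.cons_val_one, Matrix.empty_val', Matrix.cons_val_fin_one]
    push_cast
    rw [neg_pow, pow_add, pow_add]
    field_simp

lemma wignerd_of_not_le {L M N : ℤ} (θ : ℝ) (h : ¬(|M| ≤ L ∧ |N| ≤ L)) :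
    wignerd L M N θ = 0 :=
  if_neg h

lemma wignerd_mul_sqrt (θ : ℝ) {L j i : ℕ} (hj : j ≤ L) (hi : i ≤ L) :
    wignerd L (2 * j - L) (2 * i - L) θ * √(i.factorial * (L - i).factorial : ℝ)
      = √(j.factorial * (L - j).factorial : ℝ) * symPow L (spinRotation θ) j i := by
  rw [symPow_spinRotation θ hj hi, wignerd,
    if_pos (by constructor <;> (rw [abs_le]; omega))]
  have e1 : ((L : ℤ) + (2 * j - L)) / 2 = j := by omega
  have e2 : ((L : ℤ) - (2 * j - L)) / 2 = L - j := by omega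
  have e3 : ((L : ℤ) + (2 * i - L)) / 2 = i := by omega
  have e4 : ((L : ℤ) - (2 * i - L)) / 2 = L - i := by omega
  have e5 : ((2 * i - L : ℤ) - (2 * j - L)) / 2 = i - j := by omega
  have e6 : ((2 * j - L : ℤ) - (2 * i - L)) / 2 = j - i := by omega
  have t1 : ((L : ℤ) - j).toNat = L - j := by omega
  have t2 : ((L : ℤ) - i).toNat = L - i := by omega
  rw [e1, e2, e3, e4, e5, e6, t1, t2, Int.toNat_natCast, Int.toNat_natCast]
  have hj' : (0 : ℝ) ≤ j.factorial * (L - j).factorial := by positivity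
  have hi' : (0 : ℝ) ≤ i.factorial * (L - i).factorial := by positivity
  push_cast
  rw [show (j.factorial * (L - j).factorial * i.factorial * (L - i).factorial : ℝ)
      = (j.factorial * (L - j).factorial) * (i.factorial * (L - i).factorial) by ring,
    Real.sqrt_mul hj']
  generalize (∑ s ∈ _, _ : ℝ) = σ
  linear_combination (√(j.factorial * (L - j).factorial : ℝ) * σ) * Real.mul_self_sqrt hi'

theorem wignerd_mul_wignerd (θ₁ θ₂ : ℝ) {L j i : ℕ} (hj : j ≤ L) (hi : i ≤ L) :
    wignerd L (2 * j - L) (2 * i - L) θ₁ * wignerd L (2 * i - L) (2 * j - L) θ₂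
      = symPow L (spinRotation θ₁) j i * symPow L (spinRotation θ₂) i j := by
  have hpos (k : ℕ) : 0 < √(k.factorial * (L - k).factorial : ℝ) := by positivity
  refine mul_right_cancel₀ (mul_pos (hpos i) (hpos j)).ne' ?_
  linear_combination symPow L (spinRotation θ₂) i j * √(i.factorial * (L - i).factorial : ℝ) *
      wignerd_mul_sqrt θ₁ hj hi +
    wignerd L (2 * j - L) (2 * i - L) θ₁ * √(i.factorial * (L - i).factorial : ℝ) *
      wignerd_mul_sqrt θ₂ hi hj

section GroupAlgebra

open AddMonoidAlgebra

variable {R G : Type*} [CommRing R] [AddCommGroup G]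

noncomputable def twistDiag (u : G) : Matrix (Fin 2) (Fin 2) R[G] :=
  !![of' R G u, 0; 0, of' R G (-u)]

/-- `diag(x, x⁻¹) A diag(y, y⁻¹) B`, where `x = of' u` and `y = of' v` play the role of formal
Laurent variables. -/
noncomputable def twistedProduct (u v : G) (A B : Matrix (Fin 2) (Fin 2) R) :
    Matrix (Fin 2) (Fin 2) R[G] :=
  (twistDiag u * A.map (algebraMap R R[G])) * (twistDiag v * B.map (algebraMap R R[G]))

lemma of'_pow_mul_of'_neg_pow (u : G) {L j : ℕ} (hj : j ≤ L) :
    of' R G u ^ j * of' R G (-u) ^ (L - j) = of' R G ((2 * j - L : ℤ) • u) := by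
  simp only [of'_apply, single_pow, one_pow, single_mul_single, mul_one]
  congr 1
  rw [← natCast_zsmul, ← natCast_zsmul, smul_neg, ← sub_eq_add_neg, ← sub_smul]
  congr 1
  omega

lemma symPow_twistDiag_mul (u : G) (A : Matrix (Fin 2) (Fin 2) R) {L j i : ℕ} (hj : j ≤ L)
    (hi : i ≤ L) :
    symPow L (twistDiag u * A.map (algebraMap R R[G])) j i
      = single ((2 * j - L : ℤ) • u) (symPow L A j i) := by
  rw [twistDiag, symPow_diagonal_mul _ _ _ hj hi, of'_pow_mul_of'_neg_pow u hj,
    symPow_map, coe_algebraMap, Function.comp_apply, Algebra.algebraMap_self, RingHom.id_apply,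
    of'_apply, single_mul_single, add_zero, one_mul]

theorem symPowTrace_twistedProduct (u v : G) (A B : Matrix (Fin 2) (Fin 2) R) (L : ℕ) :
    symPowTrace L (twistedProduct u v A B)
      = ∑ e₁ ∈ range (L + 1), ∑ e₂ ∈ range (L + 1),
          single ((2 * e₁ - L : ℤ) • u + (2 * e₂ - L : ℤ) • v)
            (symPow L A e₁ e₂ * symPow L B e₂ e₁) := by
  refine sum_congr rfl fun e₁ he₁ => ?_
  rw [mem_range] at he₁
  rw [twistedProduct, symPow_mul _ _ _ (by omega)]
  refine sum_congr rfl fun e₂ he₂ => ?_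
  rw [mem_range] at he₂
  rw [symPow_twistDiag_mul _ _ (by omega) (by omega), symPow_twistDiag_mul _ _ (by omega)
    (by omega), single_mul_single]

lemma det_twistDiag (u : G) : (twistDiag u : Matrix (Fin 2) (Fin 2) R[G]).det = 1 := by
  rw [twistDiag, Matrix.det_fin_two_of, of'_apply, of'_apply, single_mul_single, mul_zero,
    sub_zero, add_neg_cancel, mul_one]
  rfl

lemma det_twistedProduct (u v : G) (A B : Matrix (Fin 2) (Fin 2) R) :
    (twistedProduct u v A B).det = algebraMap R R[G] (A.det * B.det) := by
  rw [twistedProduct, Matrix.det_mul, Matrix.det_mul, Matrix.det_mul, det_twistDiag,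
    det_twistDiag, map_mul, RingHom.map_det, RingHom.map_det]
  simp

/-- Conjugation by `!![0, -1; 1, 0]` inverts the diagonal factors and fixes the rotations. -/
lemma trace_twistedProduct_spinRotation_neg (u v : G) (θ₁ θ₂ : ℝ) :
    (twistedProduct (-u) (-v) (spinRotation θ₁) (spinRotation θ₂)).trace
      = (twistedProduct u v (spinRotation θ₁) (spinRotation θ₂)).trace := by
  simp only [twistedProduct, Matrix.trace_fin_two, Matrix.mul_apply, Fin.sum_univ_two,
    Matrix.map_apply]
  simp only [twistDiag, spinRotation, of'_apply, neg_neg, Matrix.of_apply, Matrix.cons_val',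
    Matrix.cons_val_zero, Matrix.cons_val_one, Matrix.cons_val_fin_one, coe_algebraMap,
    Algebra.algebraMap_self, RingHom.coe_id, Function.comp_apply, id_eq, single_mul_single,
    add_zero, zero_add, one_mul, zero_mul, single_neg, mul_neg, neg_mul, neg_zero]
  ring

lemma det_twistedProduct_spinRotation (u v : G) (θ₁ θ₂ : ℝ) :
    (twistedProduct u v (spinRotation θ₁) (spinRotation θ₂)).det = 1 := by
  rw [det_twistedProduct, det_spinRotation, det_spinRotation, mul_one, map_one]

theorem symPowTrace_twistedProduct_spinRotation_neg (u v : G) (θ₁ θ₂ : ℝ) (L : ℕ) :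
    symPowTrace L (twistedProduct (-u) (-v) (spinRotation θ₁) (spinRotation θ₂))
      = symPowTrace L (twistedProduct u v (spinRotation θ₁) (spinRotation θ₂)) := by
  rw [symPowTrace_eq_eval_S (det_twistedProduct_spinRotation _ _ _ _),
    symPowTrace_eq_eval_S (det_twistedProduct_spinRotation _ _ _ _),
    trace_twistedProduct_spinRotation_neg]

theorem symPowTrace_twistedProduct_spinRotation (u v : G) (θ₁ θ₂ : ℝ) (L : ℕ) :
    symPowTrace L (twistedProduct u v (spinRotation θ₁) (spinRotation θ₂))
      = ∑ e₁ ∈ range (L + 1), ∑ e₂ ∈ range (L + 1),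
          single ((2 * e₁ - L : ℤ) • u + (2 * e₂ - L : ℤ) • v)
            (wignerd L (2 * e₁ - L) (2 * e₂ - L) θ₁ * wignerd L (2 * e₂ - L) (2 * e₁ - L) θ₂) := by
  rw [symPowTrace_twistedProduct]
  refine sum_congr rfl fun e₁ he₁ => sum_congr rfl fun e₂ he₂ => ?_
  rw [mem_range] at he₁ he₂
  rw [wignerd_mul_wignerd θ₁ θ₂ (by omega) (by omega)]

theorem coeff_symPowTrace_twistedProduct_spinRotation (θ₁ θ₂ : ℝ) (L : ℕ) {M N : ℤ}
    (hM : Even (M + L)) (hN : Even (N + L)) :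
    (symPowTrace L (twistedProduct ((1, 0) : ℤ × ℤ) (0, 1) (spinRotation θ₁)
        (spinRotation θ₂))).coeff (M, N)
      = wignerd L M N θ₁ * wignerd L N M θ₂ := by
  simp only [symPowTrace_twistedProduct_spinRotation, coeff_sum, Finsupp.coe_finsetSum,
    Finset.sum_apply, coeff_single, Finsupp.single_apply, Prod.smul_mk, smul_eq_mul, mul_one,
    mul_zero, Prod.mk_add_mk, add_zero, zero_add, Prod.mk.injEq]
  by_cases hMN : |M| ≤ L ∧ |N| ≤ L
  · rw [abs_le, abs_le] at hMN
    rw [Int.even_iff] at hM hN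
    obtain ⟨a, rfl⟩ : ∃ a : ℕ, M = 2 * a - L := ⟨((M + L) / 2).toNat, by omega⟩
    obtain ⟨b, rfl⟩ : ∃ b : ℕ, N = 2 * b - L := ⟨((N + L) / 2).toNat, by omega⟩
    rw [sum_eq_single_of_mem a (mem_range.mpr (by omega)) fun e₁ _ he₁ => sum_eq_zero fun e₂ _ =>
      if_neg fun h => he₁ (by omega)]
    rw [sum_eq_single_of_mem b (mem_range.mpr (by omega)) fun e₂ _ he₂ =>
      if_neg fun h => he₂ (by omega), if_pos ⟨rfl, rfl⟩]
  · rw [wignerd_of_not_le θ₁ hMN, zero_mul]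
    refine sum_eq_zero fun e₁ he₁ => sum_eq_zero fun e₂ he₂ => if_neg fun h => hMN ?_
    rw [mem_range] at he₁ he₂
    rw [abs_le, abs_le]
    omega

theorem coeff_symPowTrace_neg_mul_symPowTrace (θ₁ θ₂ : ℝ) (L₁ L₂ : ℕ) {D₁ D₂ : ℤ}
    (hD₁ : Even (D₁ + L₁ + L₂)) (hD₂ : Even (D₂ + L₁ + L₂)) :
    (symPowTrace L₁ (twistedProduct (-(1, 0) : ℤ × ℤ) (-(0, 1)) (spinRotation θ₁)
        (spinRotation θ₂)) *
      symPowTrace L₂ (twistedProduct ((1, 0) : ℤ × ℤ) (0, 1) (spinRotation θ₁)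
        (spinRotation θ₂))).coeff (D₁, D₂)
      = ∑ e₁ ∈ range (L₁ + 1), ∑ e₂ ∈ range (L₁ + 1),
          wignerd L₁ (-L₁ + 2 * e₁) (-L₁ + 2 * e₂) θ₁ *
            wignerd L₁ (-L₁ + 2 * e₂) (-L₁ + 2 * e₁) θ₂ *
            wignerd L₂ (-L₁ + 2 * e₁ + D₁) (-L₁ + 2 * e₂ + D₂) θ₁ *
            wignerd L₂ (-L₁ + 2 * e₂ + D₂) (-L₁ + 2 * e₁ + D₁) θ₂ := by
  rw [symPowTrace_twistedProduct_spinRotation (-(1, 0))]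
  simp only [sum_mul, coeff_sum, Finsupp.coe_finsetSum, Finset.sum_apply, coeff_single_mul_apply]
  refine sum_congr rfl fun e₁ _ => sum_congr rfl fun e₂ _ => ?_
  have hpt : -((2 * e₁ - L₁ : ℤ) • -((1, 0) : ℤ × ℤ) + (2 * e₂ - L₁ : ℤ) • -(0, 1)) + (D₁, D₂)
      = (-L₁ + 2 * e₁ + D₁, -L₁ + 2 * e₂ + D₂) := by
    ext <;> simp <;> ring
  rw [Int.even_iff] at hD₁ hD₂
  rw [hpt, coeff_symPowTrace_twistedProduct_spinRotation _ _ _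
    (Int.even_iff.mpr (by omega)) (Int.even_iff.mpr (by omega))]
  ring_nf

end GroupAlgebra

end Wigner

open Finset AddMonoidAlgebra Wigner

/-- Composite rule for Wigner d-matrices, two-vertex case (doubled indices:
`L₁ = 2ℓ₁`, `L₂ = 2ℓ₂`, `D₁ = 2Δ₁`, `D₂ = 2Δ₂`; the magnetic indices
`ε₁, ε₂ ∈ {-ℓ₁, …, ℓ₁}` are encoded as `-L₁ + 2e` for `e ∈ {0, …, L₁}`, and the
recoupled spin `s ∈ {|ℓ₁-ℓ₂|, …, ℓ₁+ℓ₂}` as `|L₁-L₂| + 2k` for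
`k ∈ {0, …, min(L₁,L₂)}`):
`∑_{ε₁,ε₂} d^{ℓ₁}_{ε₁ε₂}(θ₁) d^{ℓ₁}_{ε₂ε₁}(θ₂) d^{ℓ₂}_{ε₁+Δ₁,ε₂+Δ₂}(θ₁)
  d^{ℓ₂}_{ε₂+Δ₂,ε₁+Δ₁}(θ₂) = ∑_s d^s_{Δ₁Δ₂}(θ₁) d^s_{Δ₂Δ₁}(θ₂)`. -/
theorem wignerd_composite_rule_two_vertices
    (L₁ L₂ : ℤ) (hL₁ : 0 ≤ L₁) (hL₂ : 0 ≤ L₂) (θ₁ θ₂ : ℝ) (D₁ D₂ : ℤ)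
    (hD₁ : (D₁ - (L₁ + L₂)) % 2 = 0) (hD₂ : (D₂ - (L₁ + L₂)) % 2 = 0) :
    ∑ e₁ ∈ Finset.range (L₁.toNat + 1), ∑ e₂ ∈ Finset.range (L₁.toNat + 1),
      wignerd L₁ (-L₁ + 2 * e₁) (-L₁ + 2 * e₂) θ₁ *
        wignerd L₁ (-L₁ + 2 * e₂) (-L₁ + 2 * e₁) θ₂ *
        wignerd L₂ (-L₁ + 2 * e₁ + D₁) (-L₁ + 2 * e₂ + D₂) θ₁ *
        wignerd L₂ (-L₁ + 2 * e₂ + D₂) (-L₁ + 2 * e₁ + D₁) θ₂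
      = ∑ k ∈ Finset.range ((min L₁ L₂).toNat + 1),
          wignerd (|L₁ - L₂| + 2 * k) D₁ D₂ θ₁ *
            wignerd (|L₁ - L₂| + 2 * k) D₂ D₁ θ₂ := by
  lift L₁ to ℕ using hL₁
  lift L₂ to ℕ using hL₂
  have hdet := det_twistedProduct_spinRotation ((1, 0) : ℤ × ℤ) (0, 1) θ₁ θ₂
  rw [Int.toNat_natCast, ← Nat.cast_min, Int.toNat_natCast,
    ← coeff_symPowTrace_neg_mul_symPowTrace θ₁ θ₂ L₁ L₂ (Int.even_iff.mpr (by omega))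
      (Int.even_iff.mpr (by omega)),
    symPowTrace_twistedProduct_spinRotation_neg, symPowTrace_mul_symPowTrace hdet, coeff_sum,
    Finsupp.coe_finsetSum, Finset.sum_apply]
  refine sum_congr rfl fun k _ => ?_
  rw [coeff_symPowTrace_twistedProduct_spinRotation _ _ _ (Int.even_iff.mpr (by omega))
    (Int.even_iff.mpr (by omega))]
  push_cast
  rfl
end

section
/- Closed form of the entanglement entropy in the two-mode squeezing (black hole evaporation) toy model: for every t > 0, with λ_n(t) = tanh(t)^{2n} / cosh(t)², one has −∑_{n=0}^{∞} λ_n(t)·ln λ_n(t) = ln(cosh(t)²) − sinh(t)²·ln(tanh(t)²). -/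
/-! The Schmidt spectrum `λₙ = (1 - q) qⁿ`, `q = tanh² t`, is a geometric distribution, and
`1 - q = 1 / cosh² t`, `q / (1 - q) = sinh² t`. Since `negMulLog (x y) = y · negMulLog x + x · negMulLog y`,
its entropy splits into `∑ qⁿ` and `∑ n qⁿ`, giving `-log (1 - q) - q / (1 - q) · log q`. -/

open Real

lemma negMulLog_geometric (q : ℝ) (n : ℕ) :
    negMulLog ((1 - q) * q ^ n) = negMulLog (1 - q) * q ^ n + (1 - q) * -log q * (n * q ^ n) := by
  rw [negMulLog_mul]
  simp only [negMulLog_def, log_pow]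
  ring

lemma hasSum_negMulLog_geometric {q : ℝ} (hq₀ : 0 ≤ q) (hq₁ : q < 1) :
    HasSum (fun n : ℕ ↦ negMulLog ((1 - q) * q ^ n)) (-log (1 - q) - q / (1 - q) * log q) := by
  have hnorm : ‖q‖ < 1 := by rwa [norm_of_nonneg hq₀]
  have hsum := ((hasSum_geometric_of_lt_one hq₀ hq₁).mul_left (negMulLog (1 - q))).add
    ((hasSum_coe_mul_geometric_of_norm_lt_one hnorm).mul_left ((1 - q) * -log q))
  have h₁ : 1 - q ≠ 0 := by linarith
  have hvalue : negMulLog (1 - q) * (1 - q)⁻¹ + (1 - q) * -log q * (q / (1 - q) ^ 2)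
      = -log (1 - q) - q / (1 - q) * log q := by
    simp only [negMulLog_def]
    field_simp
    ring
  rwa [funext (negMulLog_geometric q), ← hvalue]

lemma Real.one_sub_tanh_sq (t : ℝ) : 1 - tanh t ^ 2 = (cosh t ^ 2)⁻¹ := by
  have hcosh : cosh t ≠ 0 := (cosh_pos t).ne'
  rw [tanh_eq_sinh_div_cosh, div_pow]
  field_simp
  linear_combination cosh_sq_sub_sinh_sq t

lemma Real.tanh_sq_div_one_sub_tanh_sq (t : ℝ) : tanh t ^ 2 / (1 - tanh t ^ 2) = sinh t ^ 2 := by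
  have hcosh : cosh t ≠ 0 := (cosh_pos t).ne'
  rw [one_sub_tanh_sq, div_inv_eq_mul, tanh_eq_sinh_div_cosh, div_pow]
  field_simp

theorem two_mode_squeezing_entropy_closed_form_general
    (t : ℝ)
    (lam : ℕ → ℝ)
    (hlam : ∀ n : ℕ, lam n = Real.tanh t ^ (2 * n) / Real.cosh t ^ 2) :
    ∑' n : ℕ, -(lam n * Real.log (lam n))
      = Real.log (Real.cosh t ^ 2) - Real.sinh t ^ 2 * Real.log (Real.tanh t ^ 2) := by
  have hlam_geometric : ∀ n, lam n = (1 - tanh t ^ 2) * (tanh t ^ 2) ^ n := fun n ↦ by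
    rw [hlam, one_sub_tanh_sq, pow_mul]
    ring
  have hentropy := (hasSum_negMulLog_geometric (sq_nonneg (tanh t)) (tanh_sq_lt_one t)).tsum_eq
  rw [one_sub_tanh_sq, log_inv, neg_neg, ← one_sub_tanh_sq, tanh_sq_div_one_sub_tanh_sq] at hentropy
  simpa only [← hlam_geometric, negMulLog_eq_neg] using hentropy

/-- Closed form of the entanglement entropy in the two-mode squeezing (black hole
evaporation) toy model: for `t > 0`, with Schmidt eigenvalues
`λₙ(t) = tanh(t)^{2n} / cosh(t)²`,
`-∑ₙ λₙ ln λₙ = ln(cosh² t) - sinh² t · ln(tanh² t)`. -/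
theorem two_mode_squeezing_entropy_closed_form
    (t : ℝ) (ht : 0 < t)
    (lam : ℕ → ℝ)
    (hlam : ∀ n : ℕ, lam n = Real.tanh t ^ (2 * n) / Real.cosh t ^ 2) :
    ∑' n : ℕ, -(lam n * Real.log (lam n))
      = Real.log (Real.cosh t ^ 2) - Real.sinh t ^ 2 * Real.log (Real.tanh t ^ 2) :=
  two_mode_squeezing_entropy_closed_form_general t lam hlam
end

section
/- In the two-mode squeezing toy model, the entanglement entropy S(t) = ln(cosh(t)²) − sinh(t)²·ln(tanh(t)²) has vanishing initial growth rate: the first derivative of S tends to 0 as t → 0⁺, i.e. Tendsto (fun t => deriv S t) (𝓝[>] 0) (𝓝 0). -/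
/-!
Since `cosh² t = 1 + sinh² t`, the entropy equals `cosh² t · ln cosh² t - sinh² t · ln sinh² t`,
whose derivative at `t ≠ 0` is `2 cosh t · (sinh t · ln cosh² t - sinh t · ln sinh² t)`.
Because `x ↦ x · ln x²` is continuous at `0` with value `0`, this derivative extends
continuously to `t = 0` with value `0`.
-/

open Filter Real

lemma log_cosh_sq_sub_sinh_sq_mul_log_tanh_sq_eq (t : ℝ) :
    log (cosh t ^ 2) - sinh t ^ 2 * log (tanh t ^ 2)
      = cosh t ^ 2 * log (cosh t ^ 2) - sinh t ^ 2 * log (sinh t ^ 2) := by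
  rcases eq_or_ne t 0 with rfl | ht
  · simp
  have hs : sinh t ^ 2 ≠ 0 := pow_ne_zero 2 (sinh_ne_zero.mpr ht)
  have hc : cosh t ^ 2 ≠ 0 := pow_ne_zero 2 (cosh_pos t).ne'
  rw [tanh_eq_sinh_div_cosh, div_pow, log_div hs hc, cosh_sq]
  ring

lemma hasDerivAt_cosh_sq_mul_log_sub_sinh_sq_mul_log {t : ℝ} (ht : t ≠ 0) :
    HasDerivAt (fun t => cosh t ^ 2 * log (cosh t ^ 2) - sinh t ^ 2 * log (sinh t ^ 2))
      (2 * cosh t * (sinh t * log (cosh t ^ 2) - sinh t * log (sinh t ^ 2))) t := by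
  have hs : sinh t ^ 2 ≠ 0 := pow_ne_zero 2 (sinh_ne_zero.mpr ht)
  have hc : cosh t ^ 2 ≠ 0 := pow_ne_zero 2 (cosh_pos t).ne'
  refine (((hasDerivAt_mul_log hc).comp t ((hasDerivAt_cosh t).fun_pow 2)).sub
    ((hasDerivAt_mul_log hs).comp t ((hasDerivAt_sinh t).fun_pow 2))).congr_deriv ?_
  push_cast
  ring

lemma continuous_mul_log_sq : Continuous fun x : ℝ => x * log (x ^ 2) := by
  convert continuous_mul_log.const_mul 2 using 2 with x
  rw [log_pow]
  push_cast
  ring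

lemma continuous_cosh_mul_sinh_mul_log_cosh_sq_sub_log_sinh_sq :
    Continuous fun t => 2 * cosh t * (sinh t * log (cosh t ^ 2) - sinh t * log (sinh t ^ 2)) := by
  have hs : Continuous fun t => sinh t * log (sinh t ^ 2) :=
    continuous_mul_log_sq.comp continuous_sinh
  have hc : Continuous fun t => log (cosh t ^ 2) :=
    (continuous_cosh.pow 2).log fun t => pow_ne_zero 2 (cosh_pos t).ne'
  fun_prop

/-- In the two-mode squeezing toy model, the entanglement entropy
`S(t) = ln(cosh² t) - sinh² t · ln(tanh² t)` has vanishing initial growth rate: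
`S'(t) → 0` as `t → 0⁺`. -/
theorem two_mode_squeezing_entropy_deriv_tendsto_zero
    (S : ℝ → ℝ)
    (hS : ∀ t : ℝ, S t
      = Real.log (Real.cosh t ^ 2) - Real.sinh t ^ 2 * Real.log (Real.tanh t ^ 2)) :
    Tendsto (fun t : ℝ => deriv S t) (nhdsWithin 0 (Set.Ioi 0)) (nhds 0) := by
  have hS_eq : S = fun t => cosh t ^ 2 * log (cosh t ^ 2) - sinh t ^ 2 * log (sinh t ^ 2) :=
    funext fun t => (hS t).trans (log_cosh_sq_sub_sinh_sq_mul_log_tanh_sq_eq t)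
  have hderiv : ∀ᶠ t in nhdsWithin 0 (Set.Ioi 0),
      2 * cosh t * (sinh t * log (cosh t ^ 2) - sinh t * log (sinh t ^ 2)) = deriv S t := by
    filter_upwards [self_mem_nhdsWithin] with t ht
    rw [hS_eq, (hasDerivAt_cosh_sq_mul_log_sub_sinh_sq_mul_log (ne_of_gt ht)).deriv]
  refine Tendsto.congr' hderiv ?_
  simpa using
    (continuous_cosh_mul_sinh_mul_log_cosh_sq_sub_log_sinh_sq.tendsto 0).mono_left nhdsWithin_le_nhds
end

section
/- In the two-mode squeezing toy model, the entanglement entropy S(t) = ln(cosh(t)²) − sinh(t)²·ln(tanh(t)²) has divergent initial acceleration: the second derivative of S tends to +∞ as t → 0⁺, i.e. Tendsto (fun t => deriv (deriv S) t) (𝓝[>] 0) atTop. -/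
/-!
Since `tanh' = 1 / cosh²`, the logarithmic derivative of `tanh² t` is `4 / sinh 2t`, and the
`2 tanh t` terms coming from the two summands of `S` cancel: `S'(t) = -sinh 2t · ln(tanh² t)`.
Differentiating once more, `S''(t) = -2 cosh 2t · ln(tanh² t) - 4`, which tends to `+∞` as
`t → 0` because `tanh² t → 0⁺`.
-/

open Filter Real Topology

noncomputable def twoModeEntropy (t : ℝ) : ℝ :=
  log (cosh t ^ 2) - sinh t ^ 2 * log (tanh t ^ 2)

theorem Real.hasDerivAt_tanh (t : ℝ) : HasDerivAt tanh (1 / cosh t ^ 2) t := by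
  rw [show tanh = sinh / cosh from funext tanh_eq_sinh_div_cosh]
  refine ((hasDerivAt_sinh t).div (hasDerivAt_cosh t) (cosh_pos t).ne').congr_deriv ?_
  rw [← cosh_sq_sub_sinh_sq t]
  ring

theorem Real.tanh_ne_zero {t : ℝ} (ht : t ≠ 0) : tanh t ≠ 0 := by
  rw [tanh_eq_sinh_div_cosh]
  exact div_ne_zero (sinh_ne_zero.mpr ht) (cosh_pos t).ne'

theorem hasDerivAt_log_tanh_sq {t : ℝ} (ht : t ≠ 0) :
    HasDerivAt (fun x => log (tanh x ^ 2)) (4 / sinh (2 * t)) t := by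
  refine (((hasDerivAt_tanh t).fun_pow 2).log (pow_ne_zero 2 (tanh_ne_zero ht))).congr_deriv ?_
  have hs : sinh t ≠ 0 := sinh_ne_zero.mpr ht
  have hc : cosh t ≠ 0 := (cosh_pos t).ne'
  rw [tanh_eq_sinh_div_cosh, sinh_two_mul, show (2 - 1 : ℕ) = 1 from rfl, pow_one]
  field_simp
  ring

theorem hasDerivAt_twoModeEntropy {t : ℝ} (ht : t ≠ 0) :
    HasDerivAt twoModeEntropy (-sinh (2 * t) * log (tanh t ^ 2)) t := by
  have hc : cosh t ≠ 0 := (cosh_pos t).ne'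
  have h := (((hasDerivAt_cosh t).fun_pow 2).log (pow_ne_zero 2 hc)).fun_sub
    (((hasDerivAt_sinh t).fun_pow 2).fun_mul (hasDerivAt_log_tanh_sq ht))
  refine h.congr_deriv ?_
  have hs : sinh t ≠ 0 := sinh_ne_zero.mpr ht
  rw [sinh_two_mul]
  field_simp
  ring

theorem deriv_deriv_twoModeEntropy {t : ℝ} (ht : t ≠ 0) :
    deriv (deriv twoModeEntropy) t = -2 * cosh (2 * t) * log (tanh t ^ 2) - 4 := by
  have hderiv : deriv twoModeEntropy =ᶠ[𝓝 t] fun x => -sinh (2 * x) * log (tanh x ^ 2) := by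
    filter_upwards [isOpen_ne.mem_nhds ht] with x hx
    exact (hasDerivAt_twoModeEntropy hx).deriv
  rw [hderiv.deriv_eq]
  have h := ((((hasDerivAt_id' t).const_mul 2).sinh).fun_neg).fun_mul (hasDerivAt_log_tanh_sq ht)
  refine (h.congr_deriv ?_).deriv
  have hs : sinh (2 * t) ≠ 0 := sinh_ne_zero.mpr (mul_ne_zero two_ne_zero ht)
  field_simp
  ring

theorem tendsto_log_tanh_sq_nhdsNE_zero :
    Tendsto (fun t => log (tanh t ^ 2)) (𝓝[≠] 0) atBot := by
  refine tendsto_log_nhdsNE_zero.comp (tendsto_nhdsWithin_iff.mpr ⟨?_, ?_⟩)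
  · have h := ((hasDerivAt_tanh 0).continuousAt.fun_pow 2).tendsto
    rw [tanh_zero, zero_pow two_ne_zero] at h
    exact h.mono_left nhdsWithin_le_nhds
  · filter_upwards [self_mem_nhdsWithin] with t ht
    exact pow_ne_zero 2 (tanh_ne_zero ht)

theorem tendsto_deriv_deriv_twoModeEntropy_nhdsNE_zero :
    Tendsto (deriv (deriv twoModeEntropy)) (𝓝[≠] 0) atTop := by
  have hcosh : Tendsto (fun t => 2 * cosh (2 * t)) (𝓝[≠] 0) (𝓝 2) := by
    have hcont : Continuous fun t => 2 * cosh (2 * t) := by fun_prop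
    exact (hcont.tendsto' 0 2 (by simp)).mono_left nhdsWithin_le_nhds
  have hlog := tendsto_neg_atTop_iff.mpr tendsto_log_tanh_sq_nhdsNE_zero
  have h := (hcosh.pos_mul_atTop two_pos hlog).atTop_add (tendsto_const_nhds (x := -4))
  refine h.congr' ?_
  filter_upwards [self_mem_nhdsWithin] with t ht
  rw [deriv_deriv_twoModeEntropy ht]
  ring

/-- In the two-mode squeezing toy model, the entanglement entropy
`S(t) = ln(cosh² t) - sinh² t · ln(tanh² t)` has divergent initial acceleration:
`S''(t) → +∞` as `t → 0⁺`. -/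
theorem two_mode_squeezing_entropy_second_deriv_diverges
    (S : ℝ → ℝ)
    (hS : ∀ t : ℝ, S t
      = Real.log (Real.cosh t ^ 2) - Real.sinh t ^ 2 * Real.log (Real.tanh t ^ 2)) :
    Tendsto (fun t : ℝ => deriv (deriv S) t) (nhdsWithin 0 (Set.Ioi 0)) atTop := by
  obtain rfl : S = twoModeEntropy := funext hS
  exact tendsto_deriv_deriv_twoModeEntropy_nhdsNE_zero.mono_left
    (nhdsWithin_mono _ fun _ ht => ne_of_gt ht)
end

section
/- In the two-mode squeezing toy model, the entanglement entropy S(t) = ln(cosh(t)²) − sinh(t)²·ln(tanh(t)²) grows asymptotically linearly with slope 2: S(t)/t → 2 as t → +∞, i.e. Tendsto (fun t => S t / t) atTop (𝓝 2). -/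
open Filter Real Topology

/-!
Since `cosh t = eᵗ (1 + e⁻²ᵗ) / 2`, the first term is `2t - 2 log 2 + o(1)`. In the second,
put `x = 1 / cosh² t → 0⁺`: then `sinh² t = (1 - x) / x` and `tanh² t = 1 - x`, so it equals
`(1 - x) · log (1 - x) / x → -1`. Hence `S t = 2t + O(1)`.
-/

lemma Filter.Tendsto.div_atTop_of_sub_mul {f : ℝ → ℝ} {c L : ℝ}
    (h : Tendsto (fun t => f t - c * t) atTop (𝓝 L)) :
    Tendsto (fun t => f t / t) atTop (𝓝 c) := by
  have hdiv : Tendsto (fun t => c + (f t - c * t) / t) atTop (𝓝 (c + 0)) :=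
    tendsto_const_nhds.add (h.div_atTop tendsto_id)
  rw [add_zero] at hdiv
  refine hdiv.congr' ?_
  filter_upwards [eventually_ne_atTop 0] with t ht
  field_simp
  ring

namespace Real

lemma tendsto_cosh_atTop : Tendsto cosh atTop atTop :=
  tendsto_atTop_mono (fun t => by rw [cosh_eq]; linarith [exp_pos (-t)])
    (tendsto_exp_atTop.atTop_div_const two_pos)

lemma log_cosh_sub_self (t : ℝ) : log (cosh t) - t = log ((1 + exp (-(2 * t))) / 2) := by
  have hcosh : cosh t = exp t * ((1 + exp (-(2 * t))) / 2) := by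
    rw [cosh_eq, mul_div_assoc', mul_add, ← exp_add]
    ring_nf
  rw [hcosh, log_mul (exp_pos t).ne' (by positivity), log_exp]
  ring

lemma tendsto_log_cosh_sub_self : Tendsto (fun t => log (cosh t) - t) atTop (𝓝 (-log 2)) := by
  have hexp : Tendsto (fun t : ℝ => exp (-(2 * t))) atTop (𝓝 0) :=
    tendsto_exp_atBot.comp (tendsto_neg_atTop_atBot.comp (tendsto_id.const_mul_atTop two_pos))
  have hlog : Tendsto (fun t => log ((1 + exp (-(2 * t))) / 2)) atTop (𝓝 (log ((1 + 0) / 2))) :=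
    (continuousAt_log (by norm_num : (1 + 0 : ℝ) / 2 ≠ 0)).tendsto.comp
      ((tendsto_const_nhds.add hexp).div_const 2)
  rw [show log ((1 + 0 : ℝ) / 2) = -log 2 by rw [add_zero, one_div, log_inv]] at hlog
  simpa only [log_cosh_sub_self] using hlog

lemma tendsto_log_one_sub_div : Tendsto (fun x => log (1 - x) / x) (𝓝[≠] 0) (𝓝 (-1)) := by
  have hderiv : HasDerivAt (fun x => log (1 - x)) (-1) 0 := by
    simpa using ((hasDerivAt_id (0 : ℝ)).const_sub 1).log (by norm_num)
  simpa [div_eq_inv_mul] using hderiv.tendsto_slope_zero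

lemma tendsto_sinh_sq_mul_log_tanh_sq :
    Tendsto (fun t => sinh t ^ 2 * log (tanh t ^ 2)) atTop (𝓝 (-1)) := by
  have hsech : Tendsto (fun t => (cosh t ^ 2)⁻¹) atTop (𝓝[≠] 0) :=
    tendsto_nhdsWithin_mono_right (fun _ hx => (Set.mem_Ioi.mp hx).ne')
      (tendsto_inv_atTop_nhdsGT_zero.comp
        ((tendsto_pow_atTop two_ne_zero).comp tendsto_cosh_atTop))
  have hlim : Tendsto (fun x => (1 - x) * (log (1 - x) / x)) (𝓝[≠] 0) (𝓝 ((1 - 0) * -1)) :=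
    ((tendsto_const_nhds.sub tendsto_id).mono_left nhdsWithin_le_nhds).mul tendsto_log_one_sub_div
  rw [sub_zero, one_mul] at hlim
  refine (hlim.comp hsech).congr fun t => ?_
  have hc : cosh t ^ 2 ≠ 0 := by positivity
  have htanh : tanh t ^ 2 = 1 - (cosh t ^ 2)⁻¹ := by
    rw [tanh_eq_sinh_div_cosh, div_pow, cosh_sq]
    field_simp
    ring
  rw [Function.comp_apply, htanh, sinh_sq]
  field_simp

end Real

/-- In the two-mode squeezing toy model, the entanglement entropy
`S(t) = ln(cosh² t) - sinh² t · ln(tanh² t)` grows asymptotically linearly with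
slope `2`: `S(t)/t → 2` as `t → +∞`. -/
theorem two_mode_squeezing_entropy_linear_growth
    (S : ℝ → ℝ)
    (hS : ∀ t : ℝ, S t
      = Real.log (Real.cosh t ^ 2) - Real.sinh t ^ 2 * Real.log (Real.tanh t ^ 2)) :
    Tendsto (fun t : ℝ => S t / t) atTop (nhds 2) := by
  have hlin : Tendsto (fun t => S t - 2 * t) atTop (𝓝 (2 * -log 2 - -1)) := by
    refine ((tendsto_log_cosh_sub_self.const_mul 2).sub tendsto_sinh_sq_mul_log_tanh_sq).congr
      fun t => ?_
    simp only [hS, log_pow]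
    push_cast
    ring
  exact hlin.div_atTop_of_sub_mul
end
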